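/- arXiv:1109.4542 — 3 statements merged into one kernel-verified Lean document; each statement's English description precedes it below -/
import Mathlib

section
/- Let φ, σ : (0, u_c) → ℝ be differentiable with σ > 0, λ(s) = φ(s)/σ(s), and let κ_Γ(s) = -s·σ''(s) > 0 (σ twice differentiable). Define ω_Γ(s) = λ'(s)·(l(s) - l_Γ(s)·λ(s))/κ_Γ(s) with l(s) = s·φ'(s), l_Γ(s) = s·σ'(s). Then ω_Γ(s) = s·σ(s)·(λ'(s))²/κ_Γ(s) ≥ 0 for all s ∈ (0, u_c), and ω_Γ(s) = 0 if and only if λ'(s) = 0. -/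
/-- With λ = φ/σ, κ_Γ(s) = -s·σ''(s) > 0,
ω_Γ(s) = λ'(s)·(l(s) - l_Γ(s)λ(s))/κ_Γ(s), one has
ω_Γ(s) = s·σ(s)·λ'(s)²/κ_Γ(s) ≥ 0, with equality iff λ'(s) = 0. -/
theorem omega_Gamma_identity
    (uc : ℝ) (φ σ φ' σ' σ'' lam' : ℝ → ℝ)
    (hσpos : ∀ s ∈ Set.Ioo (0:ℝ) uc, 0 < σ s)
    (hφ : ∀ s ∈ Set.Ioo (0:ℝ) uc, HasDerivAt φ (φ' s) s)
    (hσ : ∀ s ∈ Set.Ioo (0:ℝ) uc, HasDerivAt σ (σ' s) s)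
    (hσ' : ∀ s ∈ Set.Ioo (0:ℝ) uc, HasDerivAt σ' (σ'' s) s)
    (hκΓpos : ∀ s ∈ Set.Ioo (0:ℝ) uc, 0 < -s * σ'' s)
    (hlam : ∀ s ∈ Set.Ioo (0:ℝ) uc, HasDerivAt (fun t => φ t / σ t) (lam' s) s) :
    ∀ s ∈ Set.Ioo (0:ℝ) uc,
      lam' s * (s * φ' s - (s * σ' s) * (φ s / σ s)) / (-s * σ'' s)
        = s * σ s * (lam' s)^2 / (-s * σ'' s)
      ∧ 0 ≤ s * σ s * (lam' s)^2 / (-s * σ'' s)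
      ∧ (s * σ s * (lam' s)^2 / (-s * σ'' s) = 0 ↔ lam' s = 0) := by
  intro s hs
  have hσs := hσpos s hs
  have hσne : σ s ≠ 0 := ne_of_gt hσs
  have hκ := hκΓpos s hs
  have hκne : (-s * σ'' s) ≠ 0 := ne_of_gt hκ
  have hspos : 0 < s := hs.1
  -- derivative of quotient
  have hderiv : HasDerivAt (fun t => φ t / σ t)
      ((φ' s * σ s - φ s * σ' s) / (σ s)^2) s :=
    (hφ s hs).div (hσ s hs) hσne
  have hlam' : lam' s = (φ' s * σ s - φ s * σ' s) / (σ s)^2 :=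
    (hlam s hs).unique hderiv
  have key : lam' s * (s * φ' s - (s * σ' s) * (φ s / σ s))
      = s * σ s * (lam' s)^2 := by
    rw [hlam']
    field_simp
  refine ⟨by rw [key], ?_, ?_⟩
  · positivity
  · constructor
    · intro h
      have hnum : s * σ s * (lam' s)^2 = 0 :=
        (div_eq_zero_iff.1 h).resolve_right hκne
      have hpos : (0:ℝ) < s * σ s := by positivity
      have : (lam' s)^2 = 0 := by
        rcases mul_eq_zero.1 hnum with h1 | h2
        · exact absurd h1 hpos.ne'
        · exact h2
      exact pow_eq_zero_iff (n := 2) (by norm_num) |>.1 this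
    · intro h; rw [h]; ring_nf
end

section
/- Let a, b > 0 and c, d be real numbers with d ≠ 0. The quadratic form Q(x, y, z) = a·x² + b·y² - c·z² is nonnegative on the hyperplane {(x,y,z) ∈ ℝ³ : a·x + b·y + d·z = 0} if and only if c·(a + b) ≤ d². -/
/-- For a, b > 0 and d ≠ 0, the quadratic form
Q(x,y,z) = ax² + by² - cz² is nonnegative on the hyperplane ax + by + dz = 0
iff c(a + b) ≤ d². -/
theorem quadratic_form_nonneg_on_hyperplane_iff
    (a b c d : ℝ) (ha : 0 < a) (hb : 0 < b) (hd : d ≠ 0) :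
    (∀ x y z : ℝ, a * x + b * y + d * z = 0 →
        0 ≤ a * x^2 + b * y^2 - c * z^2)
      ↔ c * (a + b) ≤ d^2 := by
  have hd2 : 0 < d^2 := by positivity
  constructor
  · intro h
    have := h 1 1 (-(a + b) / d) (by field_simp; ring)
    have hz : (-(a + b) / d)^2 = (a + b)^2 / d^2 := by
      field_simp
    rw [hz] at this
    have hab : 0 < a + b := by linarith
    have h' : c * (a + b)^2 / d^2 ≤ a + b := by rw [mul_div_assoc]; linarith
    rw [div_le_iff₀ hd2] at h'
    nlinarith [mul_pos hab hab]
  · intro h x y z hz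
    rcases le_or_gt c 0 with hc | hc
    · nlinarith [sq_nonneg x, sq_nonneg y, sq_nonneg z]
    · have hzx : d * z = -(a * x + b * y) := by linarith
      have h1 : (a * x + b * y)^2 ≤ (a + b) * (a * x^2 + b * y^2) := by
        nlinarith [sq_nonneg (x - y), mul_pos ha hb]
      have h2 : c * (d * z)^2 ≤ c * ((a + b) * (a * x^2 + b * y^2)) := by
        rw [hzx]
        have : (-(a * x + b * y))^2 = (a * x + b * y)^2 := by ring
        rw [this]
        exact mul_le_mul_of_nonneg_left h1 hc.le
      have h3 : 0 ≤ a * x^2 + b * y^2 := by positivity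
      nlinarith [h2, mul_le_mul_of_nonneg_right h h3, hd2]
end

section
/- Let H be a real Hilbert space, A : D(A) ⊂ H → H a self-adjoint operator, and P an orthogonal projection on H commuting with A such that A P = -c·P for some constant c > 0 and (Aw, w) ≥ 0 for all w in the range of Q := I - P (with w ∈ D(A)). Let κ, δ > 0 satisfy κ·c > δ. If ρ ∈ D(A) satisfies κ·‖Aρ‖² + δ·(Aρ, ρ) ≤ 0, then Pρ = 0 and A(Qρ) = 0; in particular Aρ = 0. -/
/-- Abstract Hilbert-space lemma: if A is symmetric, P an
orthogonal projection commuting with A, AP = -c·P with c > 0, A is positive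
semi-definite on the range of Q = I - P, and κ·c > δ with κ, δ > 0, then
κ‖Aρ‖² + δ⟨Aρ,ρ⟩ ≤ 0 forces Pρ = 0, A(Qρ) = 0, and Aρ = 0. -/
theorem no_positive_eigenvalues_lemma
    {H : Type*} [NormedAddCommGroup H] [InnerProductSpace ℝ H]
    (A P : H →ₗ[ℝ] H)
    (hAsym : ∀ x y : H, (inner ℝ (A x) y : ℝ) = inner ℝ x (A y))
    (hPproj : ∀ x : H, P (P x) = P x)
    (hPsym : ∀ x y : H, (inner ℝ (P x) y : ℝ) = inner ℝ x (P y))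
    (hcomm : ∀ x : H, A (P x) = P (A x))
    (c : ℝ) (hc : 0 < c)
    (hAP : ∀ x : H, A (P x) = -c • (P x))
    (hAposQ : ∀ w : H, P w = 0 → (0:ℝ) ≤ inner ℝ (A w) w)
    (κ δ : ℝ) (hκ : 0 < κ) (hδ : 0 < δ) (hκc : δ < κ * c)
    (ρ : H) (hρ : κ * ‖A ρ‖^2 + δ * (inner ℝ (A ρ) ρ : ℝ) ≤ 0) :
    P ρ = 0 ∧ A (ρ - P ρ) = 0 ∧ A ρ = 0 := by
  set w := ρ - P ρ with hw
  have hPw : P w = 0 := by simp [hw, map_sub, hPproj]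
  have hAw_pos : (0:ℝ) ≤ inner ℝ (A w) w := hAposQ w hPw
  have hPρw : (inner ℝ (P ρ) w : ℝ) = 0 := by
    rw [hPsym, hPw, inner_zero_right]
  have hAPρ : A (P ρ) = -c • P ρ := hAP ρ
  have hAwPρ : (inner ℝ (A w) (P ρ) : ℝ) = 0 := by
    rw [hAsym, hAPρ, real_inner_smul_right, real_inner_comm, hPρw, mul_zero]
  have hρdec : ρ = P ρ + w := by simp [hw]
  have hAρ : A ρ = -c • P ρ + A w := by
    conv_lhs => rw [hρdec]
    rw [map_add, hAPρ]
  have hn : ‖A ρ‖^2 = c^2 * ‖P ρ‖^2 + ‖A w‖^2 := by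
    have : (inner ℝ (A ρ) (A ρ) : ℝ) = c^2 * inner ℝ (P ρ) (P ρ) + inner ℝ (A w) (A w) := by
      rw [hAρ]
      rw [inner_add_add_self]
      simp only [real_inner_smul_left, real_inner_smul_right]
      have h4 : (inner ℝ (P ρ) (A w) : ℝ) = 0 := by
        rw [real_inner_comm]; exact hAwPρ
      rw [h4, hAwPρ]
      ring
    rw [real_inner_self_eq_norm_sq, real_inner_self_eq_norm_sq,
      real_inner_self_eq_norm_sq] at this
    linarith
  have h2 : (inner ℝ (P ρ) ρ : ℝ) = ‖P ρ‖^2 := by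
    have h := inner_add_right (𝕜 := ℝ) (P ρ) (P ρ) w
    rw [← hρdec] at h
    rw [h, hPρw, real_inner_self_eq_norm_sq, add_zero]
  have h3 : (inner ℝ (A w) ρ : ℝ) = inner ℝ (A w) w := by
    have h := inner_add_right (𝕜 := ℝ) (A w) (P ρ) w
    rw [← hρdec] at h
    rw [h, hAwPρ]
    exact zero_add _
  have hi : (inner ℝ (A ρ) ρ : ℝ) = -c * ‖P ρ‖^2 + inner ℝ (A w) w := by
    rw [hAρ, inner_add_left, real_inner_smul_left, h2, h3]
  rw [hn, hi] at hρ
  have hpos : (0:ℝ) < (κ * c - δ) * c := by nlinarith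
  have h1 : (0:ℝ) ≤ (κ * c - δ) * c * ‖P ρ‖^2 :=
    mul_nonneg hpos.le (sq_nonneg _)
  have hPρ0 : ‖P ρ‖^2 = 0 := by
    have : (κ * c - δ) * c * ‖P ρ‖^2 ≤ 0 := by nlinarith [sq_nonneg ‖A w‖]
    nlinarith [sq_nonneg ‖P ρ‖]
  have hPρ : P ρ = 0 := by
    have := sq_eq_zero_iff.mp hPρ0
    exact norm_eq_zero.mp this
  have hAw0 : A w = 0 := by
    have : ‖A w‖^2 = 0 := by nlinarith [sq_nonneg ‖A w‖]
    exact norm_eq_zero.mp (sq_eq_zero_iff.mp this)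
  refine ⟨hPρ, hAw0, ?_⟩
  rw [hAρ, hPρ, hAw0, smul_zero, add_zero]
end
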